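/- Fix an integer n ≥ 1, let ε = 1/n, and let the grid squares be the n² half-open squares Q_{ij} = [iε, (i+1)ε) × [jε, (j+1)ε) for i, j ∈ {0, …, n−1}, which partition [0,1)². Let a, b be nonnegative integers and let A, B ⊆ [0,1)² be disjoint finite sets with |A ∩ Q| = a and |B ∩ Q| = b for every grid square Q. Let D ⊆ [0,1)² be Lebesgue measurable and let E be the number of grid squares Q with Q ∩ frontier(D) ≠ ∅. If b·(vol(D) + ε²·E) ≤ a·(vol(D) − ε²·E), then |B ∩ D| ≤ |A ∩ D|. -/

import Mathlib

open MeasureTheory Metric Set ENNReal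

noncomputable section

/-- The plane `ℝ²` with the Euclidean metric. -/
abbrev Plane := EuclideanSpace ℝ (Fin 2)

/-- The half-open grid square `Q_{ij} = [iε, (i+1)ε) × [jε, (j+1)ε)` with `ε = 1/n`. -/
def gridSq (n : ℕ) (p : Fin n × Fin n) : Set Plane :=
  {x | x 0 ∈ Set.Ico ((p.1 : ℝ) * (n : ℝ)⁻¹) (((p.1 : ℝ) + 1) * (n : ℝ)⁻¹) ∧
       x 1 ∈ Set.Ico ((p.2 : ℝ) * (n : ℝ)⁻¹) (((p.2 : ℝ) + 1) * (n : ℝ)⁻¹)}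

/-- The half-open unit square `[0,1)² ⊆ ℝ²`. -/
def unitSqIco : Set Plane := {x | x 0 ∈ Set.Ico (0 : ℝ) 1 ∧ x 1 ∈ Set.Ico (0 : ℝ) 1}

open scoped Function

/-!
Call a grid square *inner* if it lies in `D` and *boundary* if it meets `frontier D`. A grid
square is convex, hence preconnected, so one that meets `D` but not `frontier D` lies in `D`: the
inner and boundary squares cover `D`, and the inner ones lie in it. Since the squares are disjoint
and each has area `ε²` and holds `a` points of `A` and `b` of `B`, with `I` inner and `E` boundary
squares, `|B ∩ D| ≤ b (I + E)`, `a I ≤ |A ∩ D|` and `ε² I ≤ vol D ≤ ε² (I + E)`. The hypothesis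
then gives `b (I + E) ε² ≤ b (vol D + ε² E) ≤ a (vol D - ε² E) ≤ a I ε²`.
-/

theorem IsPreconnected.subset_or_inter_frontier_nonempty {X : Type*} [TopologicalSpace X]
    {s t : Set X} (hs : IsPreconnected s) (hst : (s ∩ t).Nonempty) :
    s ⊆ t ∨ (s ∩ frontier t).Nonempty := by
  refine or_iff_not_imp_right.2 fun hfr => ?_
  have hcover : s ⊆ interior t ∪ (closure t)ᶜ := fun x hx => by
    by_cases hxi : x ∈ interior t
    exacts [Or.inl hxi, Or.inr fun hxc => hfr ⟨x, hx, hxc, hxi⟩]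
  rcases hs.subset_or_subset isOpen_interior isClosed_closure.isOpen_compl
    (disjoint_compl_right_iff_subset.2 interior_subset_closure) hcover with h | h
  · exact h.trans interior_subset
  · obtain ⟨x, hxs, hxt⟩ := hst
    exact absurd (subset_closure hxt) (h hxs)

theorem Set.ncard_inter_biUnion_eq_mul {α ι : Type*} {S : Set α} (hS : S.Finite)
    {Q : ι → Set α} (hQ : Pairwise (Disjoint on Q)) {c : ℕ} (hc : ∀ i, (S ∩ Q i).ncard = c)
    (T : Finset ι) : (S ∩ ⋃ i ∈ T, Q i).ncard = c * T.card := by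
  rw [inter_iUnion₂, ← Finset.set_biUnion_coe,
    T.finite_toSet.ncard_biUnion (fun i _ => hS.subset inter_subset_left)
      (fun i _ j _ hij => (hQ hij).mono inter_subset_right inter_subset_right),
    finsum_mem_coe_finset]
  simp [hc, mul_comm]

theorem MeasureTheory.measureReal_biUnion_finset_eq_card_mul {α ι : Type*} [MeasurableSpace α]
    {μ : Measure α} {Q : ι → Set α} (hQ : Pairwise (Disjoint on Q))
    (hQm : ∀ i, MeasurableSet (Q i)) {v : ℝ} (hv : 0 ≤ v) (hμQ : ∀ i, μ (Q i) = ENNReal.ofReal v)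
    (T : Finset ι) : μ.real (⋃ i ∈ T, Q i) = T.card * v := by
  rw [measureReal_biUnion_finset (fun i _ j _ hij => hQ hij) (fun i _ => hQm i)
    (fun i _ => hμQ i ▸ ofReal_ne_top)]
  simp [measureReal_def, hμQ, hv]

theorem ncard_inter_le_ncard_inter_of_preconnected_tiling {α ι : Type*} [TopologicalSpace α]
    [MeasurableSpace α] [Fintype ι] {μ : Measure α} {Q : ι → Set α}
    (hQ : Pairwise (Disjoint on Q)) (hQc : ∀ i, IsPreconnected (Q i))
    (hQm : ∀ i, MeasurableSet (Q i)) {v : ℝ} (hv : 0 < v) (hμQ : ∀ i, μ (Q i) = ENNReal.ofReal v)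
    {A B D : Set α} {a b : ℕ} (hA : A.Finite) (hB : B.Finite)
    (hcA : ∀ i, (A ∩ Q i).ncard = a) (hcB : ∀ i, (B ∩ Q i).ncard = b) (hD : D ⊆ ⋃ i, Q i)
    (hineq : (b : ℝ) * (μ.real D + v * {i | (Q i ∩ frontier D).Nonempty}.ncard)
      ≤ a * (μ.real D - v * {i | (Q i ∩ frontier D).Nonempty}.ncard)) :
    (B ∩ D).ncard ≤ (A ∩ D).ncard := by
  classical
  set I := Finset.univ.filter fun i => Q i ⊆ D
  set E := Finset.univ.filter fun i => (Q i ∩ frontier D).Nonempty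
  have hE : {i | (Q i ∩ frontier D).Nonempty}.ncard = E.card := by
    rw [← ncard_coe_finset]
    simp [E]
  have hID : ⋃ i ∈ I, Q i ⊆ D := iUnion₂_subset fun i hi => (Finset.mem_filter.1 hi).2
  have hDIE : D ⊆ ⋃ i ∈ I ∪ E, Q i := fun x hx => by
    obtain ⟨i, hi⟩ := mem_iUnion.1 (hD hx)
    refine mem_biUnion ?_ hi
    rcases (hQc i).subset_or_inter_frontier_nonempty ⟨x, hi, hx⟩ with h | h <;> simp [I, E, h]
  have hμIE : μ (⋃ i ∈ I ∪ E, Q i) ≠ ⊤ :=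
    (measure_biUnion_lt_top (I ∪ E).finite_toSet fun i _ => by simp [hμQ]).ne
  have hBcount : (B ∩ D).ncard ≤ b * (I ∪ E).card :=
    ncard_inter_biUnion_eq_mul hB hQ hcB _ ▸
      ncard_le_ncard (inter_subset_inter_right _ hDIE) (hB.subset inter_subset_left)
  have hAcount : a * I.card ≤ (A ∩ D).ncard :=
    ncard_inter_biUnion_eq_mul hA hQ hcA _ ▸
      ncard_le_ncard (inter_subset_inter_right _ hID) (hA.subset inter_subset_left)
  have hvolI : I.card * v ≤ μ.real D :=
    measureReal_biUnion_finset_eq_card_mul hQ hQm hv.le hμQ I ▸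
      measureReal_mono hID (ne_top_of_le_ne_top hμIE (measure_mono hDIE))
  have hvolIE : μ.real D ≤ (I ∪ E).card * v :=
    measureReal_biUnion_finset_eq_card_mul hQ hQm hv.le hμQ (I ∪ E) ▸ measureReal_mono hDIE hμIE
  have hIE : ((I ∪ E).card : ℝ) ≤ I.card + E.card := by exact_mod_cast Finset.card_union_le I E
  rw [hE] at hineq
  have key : b * (I ∪ E).card ≤ a * I.card := by
    rw [← Nat.cast_le (α := ℝ)]
    push_cast
    refine le_of_mul_le_mul_right ?_ hv
    calc (b : ℝ) * (I ∪ E).card * v ≤ b * (μ.real D + v * E.card) := by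
          rw [mul_assoc]; gcongr; nlinarith
      _ ≤ a * (μ.real D - v * E.card) := hineq
      _ ≤ a * I.card * v := by
          rw [mul_assoc]; gcongr; nlinarith
  exact hBcount.trans (key.trans hAcount)

theorem Nat.floor_mul_eq_of_mem_Ico {n i : ℕ} {t : ℝ}
    (ht : t ∈ Ico (i * (n : ℝ)⁻¹) ((i + 1) * (n : ℝ)⁻¹)) : ⌊t * n⌋₊ = i := by
  rcases n.eq_zero_or_pos with rfl | hn
  · simp at ht
  have hn' : (0 : ℝ) < n := by exact_mod_cast hn
  simp only [← div_eq_mul_inv, mem_Ico, div_le_iff₀ hn', lt_div_iff₀ hn'] at ht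
  exact (Nat.floor_eq_iff ((Nat.cast_nonneg i).trans ht.1)).2 ht

theorem mem_Ico_floor_mul {n : ℕ} (hn : 0 < n) {t : ℝ} (ht : 0 ≤ t) :
    t ∈ Ico (⌊t * n⌋₊ * (n : ℝ)⁻¹) ((⌊t * n⌋₊ + 1) * (n : ℝ)⁻¹) := by
  have hn' : (0 : ℝ) < n := by exact_mod_cast hn
  simp only [← div_eq_mul_inv, mem_Ico, div_le_iff₀ hn', lt_div_iff₀ hn']
  exact ⟨Nat.floor_le (by positivity), Nat.lt_floor_add_one _⟩

theorem pairwise_disjoint_gridSq (n : ℕ) : Pairwise (Disjoint on gridSq n) :=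
  fun _ _ hpq => disjoint_left.2 fun _ hp hq => hpq <| Prod.ext
    (Fin.ext <| (Nat.floor_mul_eq_of_mem_Ico hp.1).symm.trans (Nat.floor_mul_eq_of_mem_Ico hq.1))
    (Fin.ext <| (Nat.floor_mul_eq_of_mem_Ico hp.2).symm.trans (Nat.floor_mul_eq_of_mem_Ico hq.2))

theorem unitSqIco_subset_iUnion_gridSq {n : ℕ} (hn : 1 ≤ n) : unitSqIco ⊆ ⋃ p, gridSq n p := by
  have hn' : (1 : ℝ) ≤ n := by exact_mod_cast hn
  have index_lt {t : ℝ} (ht : t ∈ Ico (0 : ℝ) 1) : ⌊t * n⌋₊ < n :=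
    (Nat.floor_lt (by nlinarith [ht.1])).2 (by nlinarith [ht.2])
  intro x ⟨hx0, hx1⟩
  exact mem_iUnion.2 ⟨(⟨_, index_lt hx0⟩, ⟨_, index_lt hx1⟩),
    mem_Ico_floor_mul hn hx0.1, mem_Ico_floor_mul hn hx1.1⟩

theorem convex_gridSq (n : ℕ) (p : Fin n × Fin n) : Convex ℝ (gridSq n p) :=
  ((convex_Ico _ _).linear_preimage (EuclideanSpace.proj (0 : Fin 2)).toLinearMap).inter
    ((convex_Ico _ _).linear_preimage (EuclideanSpace.proj (1 : Fin 2)).toLinearMap)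

theorem measurableSet_gridSq (n : ℕ) (p : Fin n × Fin n) : MeasurableSet (gridSq n p) :=
  (measurableSet_Ico.preimage (by fun_prop : Measurable fun x : Plane => x 0)).inter
    (measurableSet_Ico.preimage (by fun_prop : Measurable fun x : Plane => x 1))

theorem volume_gridSq (n : ℕ) (p : Fin n × Fin n) :
    volume (gridSq n p) = ENNReal.ofReal ((n : ℝ)⁻¹ ^ 2) := by
  have hpi : gridSq n p = (MeasurableEquiv.toLp 2 (Fin 2 → ℝ)).symm ⁻¹'
      univ.pi ![Ico ((p.1 : ℝ) * (n : ℝ)⁻¹) ((p.1 + 1) * (n : ℝ)⁻¹),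
        Ico ((p.2 : ℝ) * (n : ℝ)⁻¹) ((p.2 + 1) * (n : ℝ)⁻¹)] := by
    ext x
    simp [gridSq, Fin.forall_fin_two]
  rw [hpi,
    (EuclideanSpace.volume_preserving_symm_measurableEquiv_toLp (Fin 2)).measure_preimage_equiv,
    volume_pi_pi, Fin.prod_univ_two]
  simp only [Matrix.cons_val_zero, Matrix.cons_val_one, Real.volume_Ico, add_mul, one_mul,
    add_sub_cancel_left]
  rw [← ENNReal.ofReal_mul (by positivity), sq]

theorem winning_criterion_general (n : ℕ) (hn : 1 ≤ n) (a b : ℕ) (A B : Set Plane)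
    (hAfin : A.Finite) (hBfin : B.Finite)
    (hcA : ∀ p : Fin n × Fin n, (A ∩ gridSq n p).ncard = a)
    (hcB : ∀ p : Fin n × Fin n, (B ∩ gridSq n p).ncard = b)
    (D : Set Plane) (hDsub : D ⊆ unitSqIco)
    (hineq : (b : ℝ) * ((volume D).toReal +
        ((n : ℝ)⁻¹) ^ 2 * ({p : Fin n × Fin n | (gridSq n p ∩ frontier D).Nonempty}.ncard : ℝ))
      ≤ (a : ℝ) * ((volume D).toReal -
        ((n : ℝ)⁻¹) ^ 2 * ({p : Fin n × Fin n | (gridSq n p ∩ frontier D).Nonempty}.ncard : ℝ))) :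
    (B ∩ D).ncard ≤ (A ∩ D).ncard :=
  have hε : (0 : ℝ) < (n : ℝ)⁻¹ ^ 2 := by positivity
  ncard_inter_le_ncard_inter_of_preconnected_tiling (pairwise_disjoint_gridSq n)
    (fun p => (convex_gridSq n p).isPreconnected) (measurableSet_gridSq n) hε (volume_gridSq n)
    hAfin hBfin hcA hcB (hDsub.trans (unitSqIco_subset_iUnion_gridSq hn)) hineq

/-- **Winning criterion.** With `a` voters of `A` and `b` voters of `B` in every grid
square, party `A` carries any measurable district `D ⊆ [0,1)²` satisfying
`b·(vol D + ε²·E) ≤ a·(vol D - ε²·E)`, where `E` is the number of grid squares meeting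
`frontier D`. -/
theorem winning_criterion (n : ℕ) (hn : 1 ≤ n) (a b : ℕ) (A B : Set Plane)
    (hAfin : A.Finite) (hBfin : B.Finite) (hdisj : Disjoint A B)
    (hAsub : A ⊆ unitSqIco) (hBsub : B ⊆ unitSqIco)
    (hcA : ∀ p : Fin n × Fin n, (A ∩ gridSq n p).ncard = a)
    (hcB : ∀ p : Fin n × Fin n, (B ∩ gridSq n p).ncard = b)
    (D : Set Plane) (hD : MeasurableSet D) (hDsub : D ⊆ unitSqIco)
    (hineq : (b : ℝ) * ((volume D).toReal +
        ((n : ℝ)⁻¹) ^ 2 * ({p : Fin n × Fin n | (gridSq n p ∩ frontier D).Nonempty}.ncard : ℝ))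
      ≤ (a : ℝ) * ((volume D).toReal -
        ((n : ℝ)⁻¹) ^ 2 * ({p : Fin n × Fin n | (gridSq n p ∩ frontier D).Nonempty}.ncard : ℝ))) :
    (B ∩ D).ncard ≤ (A ∩ D).ncard :=
  winning_criterion_general n hn a b A B hAfin hBfin hcA hcB D hDsub hineq

end
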